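/- For every τ ∈ ℍ, the limit as z → 0 (through z ∉ ℤτ + ℤ) of θ₁(τ,z)²·μ(τ,z)/η(τ)³ exists and equals 1. That is, the massless N=4 superconformal character ch_{1/4,0}(τ,z) = (θ₁(τ,z)²/η(τ)³)·μ(τ,z) has Witten index ch_{1/4,0}(τ,0) = 1. -/

import Mathlib

/-- `q = e^{2πiτ}`. -/
noncomputable def qc (τ : ℂ) : ℂ := Complex.exp (2 * Real.pi * Complex.I * τ)

/-- The Dedekind eta function `η(τ) = e^{πiτ/12} ∏_{n ≥ 1} (1 - q^n)`. -/
noncomputable def eta (τ : ℂ) : ℂ :=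
  Complex.exp (Real.pi * Complex.I * τ / 12) * ∏' n : ℕ, (1 - qc τ ^ (n + 1))

/-- `σ₁(k)`, the sum of the divisors of `k`. -/
def sigma1 (k : ℕ) : ℕ := ∑ d ∈ k.divisors, d

/-- `θ₁(τ,z) = -i q^{1/8} y^{1/2} ∏_{n≥1}(1-qⁿ)(1-yqⁿ)(1-y⁻¹q^{n-1})`. -/
noncomputable def theta1 (τ z : ℂ) : ℂ :=
  -Complex.I * Complex.exp (Real.pi * Complex.I * τ / 4) *
    Complex.exp (Real.pi * Complex.I * z) *
    ∏' n : ℕ, ((1 - qc τ ^ (n + 1)) * (1 - qc z * qc τ ^ (n + 1)) *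
      (1 - (qc z)⁻¹ * qc τ ^ n))

/-- `θ₂(τ,z) = q^{1/8} y^{1/2} ∏_{n≥1}(1-qⁿ)(1+yqⁿ)(1+y⁻¹q^{n-1})`. -/
noncomputable def theta2 (τ z : ℂ) : ℂ :=
  Complex.exp (Real.pi * Complex.I * τ / 4) * Complex.exp (Real.pi * Complex.I * z) *
    ∏' n : ℕ, ((1 - qc τ ^ (n + 1)) * (1 + qc z * qc τ ^ (n + 1)) *
      (1 + (qc z)⁻¹ * qc τ ^ n))

/-- `θ₃(τ,z) = ∏_{n≥1}(1-qⁿ)(1+yq^{n-1/2})(1+y⁻¹q^{n-1/2})`. -/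
noncomputable def theta3 (τ z : ℂ) : ℂ :=
  ∏' n : ℕ, ((1 - qc τ ^ (n + 1)) *
    (1 + qc z * Complex.exp (2 * Real.pi * Complex.I * ((n : ℂ) + 1 / 2) * τ)) *
    (1 + (qc z)⁻¹ * Complex.exp (2 * Real.pi * Complex.I * ((n : ℂ) + 1 / 2) * τ)))

/-- `θ₄(τ,z) = ∏_{n≥1}(1-qⁿ)(1-yq^{n-1/2})(1-y⁻¹q^{n-1/2})`. -/
noncomputable def theta4 (τ z : ℂ) : ℂ :=
  ∏' n : ℕ, ((1 - qc τ ^ (n + 1)) *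
    (1 - qc z * Complex.exp (2 * Real.pi * Complex.I * ((n : ℂ) + 1 / 2) * τ)) *
    (1 - (qc z)⁻¹ * Complex.exp (2 * Real.pi * Complex.I * ((n : ℂ) + 1 / 2) * τ)))

/-- The Appell–Lerch sum
`μ(τ,z) = (-i y^{1/2}/θ₁(τ,z)) ∑_{ℓ∈ℤ} (-1)^ℓ y^ℓ q^{ℓ(ℓ+1)/2}/(1-yq^ℓ)`. -/
noncomputable def appellMu (τ z : ℂ) : ℂ :=
  -Complex.I * Complex.exp (Real.pi * Complex.I * z) / theta1 τ z *
    ∑' l : ℤ, (-1 : ℂ) ^ l * qc z ^ l * qc τ ^ (l * (l + 1) / 2) /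
      (1 - qc z * qc τ ^ l)

/-!
Write `q = e^{2πiτ}` and `y = e^{2πiz}`. Splitting off the factor `1 - y⁻¹`, the product for
`θ₁` becomes `-i q^{1/8} y^{1/2} (1 - y⁻¹) (q;q)_∞ (yq;q)_∞ (y⁻¹q;q)_∞`, while
`η³ = q^{1/8} (q;q)_∞³`; since `-y (1 - y⁻¹) = 1 - y`, this gives
`θ₁² μ / η³ = (yq;q)_∞ (y⁻¹q;q)_∞ / (q;q)_∞² · (1 - y) S(y)` with
`S(y) = ∑_ℓ (-1)^ℓ y^ℓ q^{ℓ(ℓ+1)/2} / (1 - y q^ℓ)`.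
The q-Pochhammer quotient is continuous in `y` and equals `1` at `y = 1`. In the sum, the
`ℓ = 0` term is `1 / (1 - y)`; for `ℓ ≠ 0` and `y` close to `1` the denominators stay at
distance `(1 - |q|) / 2` from `0` and the numerators are terms of a Jacobi theta series, so the
remaining sum is bounded and is killed by the factor `1 - y`.
-/

open Filter Topology

/-- The q-Pochhammer symbol `(a; q)_∞`. -/
noncomputable def qPochhammer (a q : ℂ) : ℂ := ∏' n : ℕ, (1 - a * q ^ n)

section qPochhammer

variable {q : ℂ}

lemma summable_norm_neg_mul_pow (hq : ‖q‖ < 1) (a : ℂ) :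
    Summable fun n : ℕ => ‖-(a * q ^ n)‖ := by
  simpa [norm_mul, norm_pow] using
    (summable_geometric_of_lt_one (norm_nonneg _) hq).mul_left ‖a‖

lemma multipliable_one_sub_mul_pow (hq : ‖q‖ < 1) (a : ℂ) :
    Multipliable fun n : ℕ => 1 - a * q ^ n := by
  simpa [sub_eq_add_neg] using multipliable_one_add_of_summable (summable_norm_neg_mul_pow hq a)

lemma qPochhammer_ne_zero (hq : ‖q‖ < 1) {a : ℂ} (ha : ∀ n : ℕ, a * q ^ n ≠ 1) :
    qPochhammer a q ≠ 0 := by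
  simpa [qPochhammer, sub_eq_add_neg] using tprod_one_add_ne_zero_of_summable
    (fun n => by rw [← sub_eq_add_neg, sub_ne_zero]; exact (ha n).symm)
    (summable_norm_neg_mul_pow hq a)

lemma qPochhammer_eq_one_sub_mul (hq : ‖q‖ < 1) (a : ℂ) :
    qPochhammer a q = (1 - a) * qPochhammer (a * q) q := by
  rw [qPochhammer, tprod_eq_zero_mul' ((multipliable_one_sub_mul_pow hq (a * q)).congr
    fun n => by ring)]
  simp [qPochhammer, pow_succ', mul_assoc]

lemma continuous_qPochhammer (hq : ‖q‖ < 1) : Continuous fun a => qPochhammer a q := by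
  refine continuous_iff_continuousAt.2 fun a₀ => ?_
  have hprod := Summable.hasProdLocallyUniformlyOn_nat_one_add Metric.isOpen_ball
    (K := Metric.ball (0 : ℂ) (‖a₀‖ + 1)) (f := fun n a => -(a * q ^ n))
    ((summable_geometric_of_lt_one (norm_nonneg _) hq).mul_left (‖a₀‖ + 1))
    (.of_forall fun n a ha => by
      rw [norm_neg, norm_mul, norm_pow]
      exact mul_le_mul_of_nonneg_right (by simpa using (mem_ball_zero_iff.1 ha).le)
        (by positivity))
    (fun n => by fun_prop)
  have hcont : ContinuousOn (fun a => ∏' n : ℕ, (1 + -(a * q ^ n)))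
      (Metric.ball 0 (‖a₀‖ + 1)) :=
    (hasProdLocallyUniformlyOn_iff_tendstoLocallyUniformlyOn.1 hprod).continuousOn
      (.of_forall fun s => by fun_prop)
  simpa [qPochhammer, sub_eq_add_neg] using
    hcont.continuousAt (Metric.isOpen_ball.mem_nhds (by simp))

lemma qPochhammer_self_ne_zero (hq : ‖q‖ < 1) : qPochhammer q q ≠ 0 := by
  refine qPochhammer_ne_zero hq fun n h => ?_
  have h1 : ‖q‖ ^ (n + 1) = 1 := by simpa [pow_succ'] using congrArg norm h
  rw [pow_eq_one_iff_of_nonneg (norm_nonneg q) n.succ_ne_zero] at h1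
  exact hq.ne h1

end qPochhammer

section qc

open Complex

variable {τ z : ℂ}

lemma norm_qc (τ : ℂ) : ‖qc τ‖ = Real.exp (-(2 * Real.pi * τ.im)) := by
  simp [qc, norm_exp]

lemma norm_qc_lt_one (hτ : 0 < τ.im) : ‖qc τ‖ < 1 := by
  rw [norm_qc, Real.exp_lt_one_iff, neg_lt_zero]
  positivity

lemma qc_zero : qc 0 = 1 := by simp [qc]

lemma continuous_qc : Continuous qc := by
  unfold qc
  fun_prop

lemma qc_ne_zero (z : ℂ) : qc z ≠ 0 := exp_ne_zero _

lemma qc_ne_qc_zpow (hz : ∀ m n : ℤ, z ≠ m * τ + n) (k : ℤ) : qc z ≠ qc τ ^ k := by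
  rw [qc, qc, ← exp_int_mul, Ne, exp_eq_exp_iff_exists_int]
  rintro ⟨n, hn⟩
  refine hz k n (mul_left_cancel₀ (two_pi_I_ne_zero) ?_)
  linear_combination hn

end qc

lemma tprod_theta1_factor_eq {q : ℂ} (hq : ‖q‖ < 1) (y : ℂ) :
    ∏' n : ℕ, ((1 - q ^ (n + 1)) * (1 - y * q ^ (n + 1)) * (1 - y⁻¹ * q ^ n)) =
      qPochhammer q q * qPochhammer (y * q) q * qPochhammer y⁻¹ q := by
  have hP : Multipliable fun n : ℕ => 1 - q ^ (n + 1) := by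
    simpa only [pow_succ'] using multipliable_one_sub_mul_pow hq q
  have hB : Multipliable fun n : ℕ => 1 - y * q ^ (n + 1) :=
    (multipliable_one_sub_mul_pow hq (y * q)).congr fun n => by ring
  rw [(hP.mul hB).tprod_mul (multipliable_one_sub_mul_pow hq y⁻¹), hP.tprod_mul hB]
  simp only [qPochhammer, pow_succ', mul_assoc]

lemma theta1_eq_qPochhammer {τ : ℂ} (hτ : 0 < τ.im) (z : ℂ) :
    theta1 τ z = -Complex.I * Complex.exp (Real.pi * Complex.I * τ / 4) *
      Complex.exp (Real.pi * Complex.I * z) *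
      (qPochhammer (qc τ) (qc τ) * qPochhammer (qc z * qc τ) (qc τ) *
        qPochhammer (qc z)⁻¹ (qc τ)) := by
  rw [theta1, tprod_theta1_factor_eq (norm_qc_lt_one hτ)]

lemma eta_eq_qPochhammer (τ : ℂ) :
    eta τ = Complex.exp (Real.pi * Complex.I * τ / 12) * qPochhammer (qc τ) (qc τ) := by
  simp only [eta, qPochhammer, pow_succ']

lemma theta1_ne_zero {τ z : ℂ} (hτ : 0 < τ.im) (hz : ∀ m n : ℤ, z ≠ m * τ + n) :
    theta1 τ z ≠ 0 := by
  have hq := norm_qc_lt_one hτ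
  have hB : qPochhammer (qc z * qc τ) (qc τ) ≠ 0 := by
    refine qPochhammer_ne_zero hq fun n h => qc_ne_qc_zpow hz (-(n + 1 : ℕ)) ?_
    rw [zpow_neg, zpow_natCast]
    exact eq_inv_of_mul_eq_one_left (by rw [pow_succ']; linear_combination h)
  have hC : qPochhammer (qc z)⁻¹ (qc τ) ≠ 0 := by
    refine qPochhammer_ne_zero hq fun n h => qc_ne_qc_zpow hz n ?_
    rwa [zpow_natCast, ← inv_mul_eq_one₀ (qc_ne_zero z)]
  rw [theta1_eq_qPochhammer hτ]
  have := qPochhammer_self_ne_zero hq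
  simp_all [Complex.exp_ne_zero]

noncomputable def appellLerchTerm (τ z : ℂ) (l : ℤ) : ℂ :=
  (-1 : ℂ) ^ l * qc z ^ l * qc τ ^ (l * (l + 1) / 2) / (1 - qc z * qc τ ^ l)

lemma neg_one_zpow_mul_qc_zpow_mul_qc_zpow (τ z : ℂ) (l : ℤ) :
    (-1 : ℂ) ^ l * qc z ^ l * qc τ ^ (l * (l + 1) / 2) =
      jacobiTheta₂_term l (z + 1 / 2 + τ / 2) τ := by
  have hdiv : ((l * (l + 1) / 2 : ℤ) : ℂ) = l * (l + 1) / 2 := by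
    rw [Int.cast_div (Int.even_mul_succ_self l).two_dvd (by norm_num)]
    push_cast
    ring
  rw [← Complex.exp_pi_mul_I, qc, qc, ← Complex.exp_int_mul, ← Complex.exp_int_mul,
    ← Complex.exp_int_mul, ← Complex.exp_add, ← Complex.exp_add, jacobiTheta₂_term, hdiv]
  ring_nf

lemma le_norm_one_sub_mul_zpow {q y : ℂ} (hq0 : q ≠ 0) (hq : ‖q‖ < 1)
    (hy : ‖y - 1‖ ≤ (1 - ‖q‖) / 2) {l : ℤ} (hl : l ≠ 0) :
    (1 - ‖q‖) / 2 ≤ ‖1 - y * q ^ l‖ := by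
  have hr : 0 < ‖q‖ := norm_pos_iff.2 hq0
  have hy₁ := norm_sub_norm_le y 1
  have hy₂ := norm_sub_norm_le 1 y
  rw [norm_one] at hy₁ hy₂
  rw [norm_sub_rev] at hy₂
  rcases hl.lt_or_gt with hl | hl
  · have hpow : ‖q‖ ^ (-1 : ℤ) ≤ ‖q‖ ^ l :=
      zpow_le_zpow_right_of_le_one₀ hr hq.le (by omega)
    rw [zpow_neg_one] at hpow
    have hmul : ‖q‖ * ‖q‖⁻¹ = 1 := mul_inv_cancel₀ hr.ne'
    have := norm_sub_norm_le (y * q ^ l) 1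
    rw [norm_sub_rev, norm_one, norm_mul, norm_zpow] at this
    nlinarith [mul_le_mul_of_nonneg_left hpow (norm_nonneg y), inv_pos.2 hr]
  · have hpow : ‖q‖ ^ l ≤ ‖q‖ ^ (1 : ℤ) :=
      zpow_le_zpow_right_of_le_one₀ hr hq.le (by omega)
    rw [zpow_one] at hpow
    have := norm_sub_norm_le 1 (y * q ^ l)
    rw [norm_one, norm_mul, norm_zpow] at this
    nlinarith [mul_le_mul_of_nonneg_left hpow (norm_nonneg y)]

section appellLerch

variable {τ z : ℂ}

/-- Mathlib's bound for `jacobiTheta₂_term l w τ` with `|Im w| ≤ 1 + Im τ / 2`, divided by the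
lower bound `(1 - |q|) / 2` of the denominators `|1 - y q^l|`, `l ≠ 0`. -/
noncomputable def appellLerchBound (τ : ℂ) (l : ℤ) : ℝ :=
  Real.exp (-Real.pi * (τ.im * l ^ 2 - 2 * (1 + τ.im / 2) * |l|)) / ((1 - ‖qc τ‖) / 2)

lemma summable_appellLerchBound (hτ : 0 < τ.im) : Summable (appellLerchBound τ) := by
  refine ((summable_pow_mul_jacobiTheta₂_term_bound (1 + τ.im / 2) hτ 0).div_const
    ((1 - ‖qc τ‖) / 2)).congr fun l => ?_
  simp [appellLerchBound]

lemma norm_appellLerchTerm_le (hτ : 0 < τ.im) (hz : ‖qc z - 1‖ ≤ (1 - ‖qc τ‖) / 2)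
    (hzim : |z.im| ≤ 1) {l : ℤ} (hl : l ≠ 0) :
    ‖appellLerchTerm τ z l‖ ≤ appellLerchBound τ l := by
  have hq := norm_qc_lt_one hτ
  have him : |(z + 1 / 2 + τ / 2).im| ≤ 1 + τ.im / 2 := by
    simp only [Complex.add_im, Complex.div_ofNat_im, Complex.one_im, zero_div, add_zero]
    exact (abs_add_le _ _).trans (by rw [abs_of_pos (half_pos hτ)]; linarith)
  rw [appellLerchTerm, norm_div, neg_one_zpow_mul_qc_zpow_mul_qc_zpow]
  exact div_le_div₀ (by positivity) (norm_jacobiTheta₂_term_le hτ him le_rfl l)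
    (by linarith) (le_norm_one_sub_mul_zpow (qc_ne_zero τ) hq hz hl)

lemma norm_ite_appellLerchTerm_le (hτ : 0 < τ.im) (hz : ‖qc z - 1‖ ≤ (1 - ‖qc τ‖) / 2)
    (hzim : |z.im| ≤ 1) (l : ℤ) :
    ‖if l = 0 then 0 else appellLerchTerm τ z l‖ ≤ appellLerchBound τ l := by
  split_ifs with hl
  · have := norm_qc_lt_one hτ
    rw [norm_zero, appellLerchBound]
    exact div_nonneg (Real.exp_pos _).le (by linarith)
  · exact norm_appellLerchTerm_le hτ hz hzim hl

lemma one_sub_qc_mul_tsum_appellLerchTerm (hτ : 0 < τ.im) (hlat : ∀ m n : ℤ, z ≠ m * τ + n)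
    (hz : ‖qc z - 1‖ ≤ (1 - ‖qc τ‖) / 2) (hzim : |z.im| ≤ 1) :
    (1 - qc z) * ∑' l : ℤ, appellLerchTerm τ z l =
      1 + (1 - qc z) * ∑' l : ℤ, (if l = 0 then 0 else appellLerchTerm τ z l) := by
  have hsum : Summable (appellLerchTerm τ z) :=
    (summable_appellLerchBound hτ).of_norm_bounded_eventually
      ((eventually_cofinite_ne 0).mono fun l hl => by
        simpa [hl] using norm_ite_appellLerchTerm_le hτ hz hzim l)
  have hy : 1 - qc z ≠ 0 := sub_ne_zero.2 (by simpa using (qc_ne_qc_zpow hlat 0).symm)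
  have h0 : appellLerchTerm τ z 0 = (1 - qc z)⁻¹ := by simp [appellLerchTerm]
  rw [hsum.tsum_eq_add_tsum_ite 0, mul_add, h0, mul_inv_cancel₀ hy]

lemma tendsto_one_sub_qc_mul_tsum_appellLerchTerm (hτ : 0 < τ.im) :
    Tendsto (fun z => (1 - qc z) * ∑' l : ℤ, appellLerchTerm τ z l)
      (𝓝[{z : ℂ | ∀ m n : ℤ, z ≠ m * τ + n}] 0) (𝓝 1) := by
  set L := 𝓝[{z : ℂ | ∀ m n : ℤ, z ≠ m * τ + n}] (0 : ℂ)
  have hδ : 0 < (1 - ‖qc τ‖) / 2 := half_pos (sub_pos.2 (norm_qc_lt_one hτ))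
  have hy : Tendsto (fun z => 1 - qc z) (𝓝 0) (𝓝 0) := by
    simpa [qc_zero] using (continuous_qc.tendsto 0).const_sub 1
  have hnear : ∀ᶠ z in 𝓝 (0 : ℂ),
      ‖qc z - 1‖ ≤ (1 - ‖qc τ‖) / 2 ∧ |z.im| ≤ 1 := by
    have him : Tendsto (fun z : ℂ => |z.im|) (𝓝 0) (𝓝 0) := by
      simpa using (Complex.continuous_im.abs).tendsto 0
    have hy' : Tendsto (fun z => ‖qc z - 1‖) (𝓝 0) (𝓝 0) := by
      simpa [norm_sub_rev] using hy.norm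
    exact (hy'.eventually (eventually_le_nhds hδ)).and
      (him.eventually (eventually_le_nhds one_pos))
  have hev : ∀ᶠ z in L, (∀ m n : ℤ, z ≠ m * τ + n) ∧
      ‖qc z - 1‖ ≤ (1 - ‖qc τ‖) / 2 ∧ |z.im| ≤ 1 :=
    eventually_mem_nhdsWithin.and (hnear.filter_mono nhdsWithin_le_nhds)
  have hbdd : IsBoundedUnder (· ≤ ·) L
      fun z => ‖∑' l : ℤ, (if l = 0 then 0 else appellLerchTerm τ z l)‖ :=
    ⟨∑' l, appellLerchBound τ l, eventually_map.2 (hev.mono fun z hz =>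
      tsum_of_norm_bounded (summable_appellLerchBound hτ).hasSum
        (norm_ite_appellLerchTerm_le hτ hz.2.1 hz.2.2))⟩
  have hrest := (hy.mono_left nhdsWithin_le_nhds).zero_mul_isBoundedUnder_le hbdd
  simpa using (tendsto_const_nhds.add hrest).congr' (hev.mono fun z hz =>
    (one_sub_qc_mul_tsum_appellLerchTerm hτ hz.1 hz.2.1 hz.2.2).symm)

end appellLerch

lemma theta1_sq_mul_appellMu_div_eta_pow_three {τ z : ℂ} (hτ : 0 < τ.im)
    (hz : ∀ m n : ℤ, z ≠ m * τ + n) :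
    theta1 τ z ^ 2 * appellMu τ z / eta τ ^ 3 =
      qPochhammer (qc z * qc τ) (qc τ) * qPochhammer ((qc z)⁻¹ * qc τ) (qc τ) /
        qPochhammer (qc τ) (qc τ) ^ 2 * ((1 - qc z) * ∑' l : ℤ, appellLerchTerm τ z l) := by
  have hq := norm_qc_lt_one hτ
  have hθ := theta1_ne_zero hτ hz
  have hP := qPochhammer_self_ne_zero hq
  have hy := qc_ne_zero z
  have hsq : Complex.exp (Real.pi * Complex.I * z) ^ 2 = qc z := by
    rw [← Complex.exp_nat_mul, qc]; push_cast; ring_nf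
  have hcube : Complex.exp (Real.pi * Complex.I * τ / 12) ^ 3 =
      Complex.exp (Real.pi * Complex.I * τ / 4) := by
    rw [← Complex.exp_nat_mul]; push_cast; ring_nf
  have hμ : theta1 τ z ^ 2 * appellMu τ z =
      theta1 τ z * (-Complex.I * Complex.exp (Real.pi * Complex.I * z)) *
        ∑' l : ℤ, appellLerchTerm τ z l := by
    rw [appellMu]; field_simp; rfl
  rw [hμ, theta1_eq_qPochhammer hτ, qPochhammer_eq_one_sub_mul hq (qc z)⁻¹, eta_eq_qPochhammer,
    mul_pow, hcube]
  field_simp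
  rw [Complex.I_sq, mul_comm Complex.I, hsq]
  ring

lemma tendsto_qPochhammer_mul_qPochhammer_div_sq {τ : ℂ} (hτ : 0 < τ.im) :
    Tendsto (fun z => qPochhammer (qc z * qc τ) (qc τ) *
        qPochhammer ((qc z)⁻¹ * qc τ) (qc τ) / qPochhammer (qc τ) (qc τ) ^ 2)
      (𝓝 0) (𝓝 1) := by
  have hq := norm_qc_lt_one hτ
  have hcont : Continuous fun z => qPochhammer (qc z * qc τ) (qc τ) *
      qPochhammer ((qc z)⁻¹ * qc τ) (qc τ) / qPochhammer (qc τ) (qc τ) ^ 2 :=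
    (((continuous_qPochhammer hq).comp (continuous_qc.mul continuous_const)).mul
      ((continuous_qPochhammer hq).comp
        ((continuous_qc.inv₀ qc_ne_zero).mul continuous_const))).div_const _
  simpa [qc_zero, ← sq, qPochhammer_self_ne_zero hq] using hcont.tendsto 0

/-- the massless N=4 character `ch_{1/4,0}(τ,z) = θ₁(τ,z)²μ(τ,z)/η(τ)³` has
Witten index 1: as `z → 0` through points not in `ℤτ + ℤ`, `θ₁(τ,z)²·μ(τ,z)/η(τ)³ → 1`. -/
theorem stmt_16 (τ : ℂ) (hτ : 0 < τ.im) :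
    Filter.Tendsto (fun z : ℂ => theta1 τ z ^ 2 * appellMu τ z / eta τ ^ 3)
      (nhdsWithin 0 {z : ℂ | ∀ m n : ℤ, z ≠ m * τ + n}) (nhds 1) := by
  have h := ((tendsto_qPochhammer_mul_qPochhammer_div_sq hτ).mono_left nhdsWithin_le_nhds).mul
    (tendsto_one_sub_qc_mul_tsum_appellLerchTerm hτ)
  rw [mul_one] at h
  exact h.congr' (eventually_mem_nhdsWithin.mono fun z hz =>
    (theta1_sq_mul_appellMu_div_eta_pow_three hτ hz).symm)
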